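/- arXiv:1902.01637 — 5 statements merged into one kernel-verified Lean document; each statement's English description precedes it below -/
import Mathlib

section
/- Let A ⊆ ℝ^d be a convex set, let R : ℝ^d → ℝ be differentiable and convex, let z ∈ ℝ^d and c ∈ A, and let a* be a minimizer over A of a ↦ z·a + D_R(a, c). Then for every b ∈ A: z · (a* − b) ≤ D_R(b, c) − D_R(b, a*) − D_R(a*, c). -/
/-- The standard dot product on `ℝ^d`. -/
noncomputable def dot {d : ℕ} (g x : Fin d → ℝ) : ℝ := ∑ i, g i * x i

/-- The Bregman divergence `D_R(x,y) = R(x) − R(y) − ∇R(y)·(x−y)` of a differentiable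
function `R : ℝ^d → ℝ`. -/
noncomputable def breg {d : ℕ} (R : (Fin d → ℝ) → ℝ) (x y : Fin d → ℝ) : ℝ :=
  R x - R y - fderiv ℝ R y (x - y)

/-! The minimality of `a*` gives the first-order condition `(z + ∇R(a*) − ∇R(c)) · (b − a*) ≥ 0`
along the segment from `a*` to `b ∈ A`, and the three-point identity
`D_R(b,c) − D_R(b,a*) − D_R(a*,c) = (∇R(a*) − ∇R(c)) · (b − a*)` turns this into the claim. -/

theorem IsMinOn.hasFDerivAt_sub_nonneg_of_convex {E : Type*} [NormedAddCommGroup E]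
    [NormedSpace ℝ E] {f : E → ℝ} {f' : E →L[ℝ] ℝ} {s : Set E} {a b : E}
    (h : IsMinOn f s a) (hf : HasFDerivAt f f' a) (hs : Convex ℝ s) (ha : a ∈ s) (hb : b ∈ s) :
    0 ≤ f' (b - a) :=
  h.localize.hasFDerivWithinAt_nonneg hf.hasFDerivWithinAt
    (sub_mem_posTangentConeAt_of_segment_subset (hs.segment_subset ha hb))

section

variable {d : ℕ}

theorem dot_sub (z x y : Fin d → ℝ) : dot z (x - y) = dot z x - dot z y :=
  dotProduct_sub z x y

noncomputable def dotCLM (z : Fin d → ℝ) : (Fin d → ℝ) →L[ℝ] ℝ :=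
  LinearMap.toContinuousLinearMap (dotProductEquiv ℝ (Fin d) z)

theorem coe_dotCLM (z : Fin d → ℝ) : ⇑(dotCLM z) = dot z := by
  funext x; exact dotProductEquiv_apply_apply ℝ (Fin d) z x

theorem hasFDerivAt_dot (z x : Fin d → ℝ) : HasFDerivAt (dot z) (dotCLM z) x :=
  coe_dotCLM z ▸ (dotCLM z).hasFDerivAt

theorem hasFDerivAt_breg_left {R : (Fin d → ℝ) → ℝ} {x : Fin d → ℝ}
    (hR : DifferentiableAt ℝ R x) (y : Fin d → ℝ) :
    HasFDerivAt (fun x' => breg R x' y) (fderiv ℝ R x - fderiv ℝ R y) x := by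
  simpa only [breg, map_sub] using
    (hR.hasFDerivAt.sub_const (R y)).fun_sub ((fderiv ℝ R y).hasFDerivAt.sub_const (fderiv ℝ R y y))

theorem breg_sub_breg_sub_breg (R : (Fin d → ℝ) → ℝ) (a b c : Fin d → ℝ) :
    breg R b c - breg R b a - breg R a c = (fderiv ℝ R a - fderiv ℝ R c) (b - a) := by
  have hsplit : b - c = (b - a) + (a - c) := by abel
  simp only [breg, sub_apply, hsplit, map_add]
  ring

end

theorem bregman_three_point_general {d : ℕ}
    (A : Set (Fin d → ℝ)) (hA : Convex ℝ A)
    (R : (Fin d → ℝ) → ℝ) (hRdiff : Differentiable ℝ R)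
    (z c astar : Fin d → ℝ) (hastar : astar ∈ A)
    (hmin : IsMinOn (fun a => dot z a + breg R a c) A astar) :
    ∀ b ∈ A, dot z (astar - b) ≤ breg R b c - breg R b astar - breg R astar c := by
  intro b hb
  have hfirst := hmin.hasFDerivAt_sub_nonneg_of_convex
    ((hasFDerivAt_dot z astar).add (hasFDerivAt_breg_left (hRdiff astar) c)) hA hastar hb
  rw [add_apply, coe_dotCLM, dot_sub] at hfirst
  rw [breg_sub_breg_sub_breg, dot_sub]
  linarith

/-- Three-point lemma for Bregman projections: if `a*` minimizes
`a ↦ z·a + D_R(a,c)` over the convex set `A`, then for every `b ∈ A`,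
`z·(a* − b) ≤ D_R(b,c) − D_R(b,a*) − D_R(a*,c)`. -/
theorem bregman_three_point {d : ℕ}
    (A : Set (Fin d → ℝ)) (hA : Convex ℝ A)
    (R : (Fin d → ℝ) → ℝ) (hRdiff : Differentiable ℝ R)
    (hRconv : ConvexOn ℝ Set.univ R)
    (z c astar : Fin d → ℝ) (hc : c ∈ A) (hastar : astar ∈ A)
    (hmin : IsMinOn (fun a => dot z a + breg R a c) A astar) :
    ∀ b ∈ A, dot z (astar - b) ≤ breg R b c - breg R b astar - breg R astar c :=
  bregman_three_point_general A hA R hRdiff z c astar hastar hmin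
end

section
/- For any a > 0, a₀ > 0, any n ≥ 1 and any real numbers a₁, …, a_n ∈ [0, a]: Σ_{i=1}^{n} a_i / √(a₀ + Σ_{j=1}^{i−1} a_j) ≤ 2a/√a₀ + 3√a + 3√(a₀ + Σ_{i=1}^{n−1} a_i). -/
private lemma sqrt_add_le_aux (x y : ℝ) (hx : 0 ≤ x) (hy : 0 ≤ y) :
    Real.sqrt (x + y) ≤ Real.sqrt x + Real.sqrt y := by
  have h1 := Real.sq_sqrt hx
  have h2 := Real.sq_sqrt hy
  have h3 := Real.sqrt_nonneg x
  have h4 := Real.sqrt_nonneg y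
  have h5 : (0:ℝ) ≤ Real.sqrt x * Real.sqrt y := mul_nonneg h3 h4
  have h : x + y ≤ (Real.sqrt x + Real.sqrt y) ^ 2 := by nlinarith
  have h6 : Real.sqrt (x + y) ≤ Real.sqrt ((Real.sqrt x + Real.sqrt y) ^ 2) :=
    Real.sqrt_le_sqrt h
  rwa [Real.sqrt_sq (by positivity)] at h6

/-- For any `a > 0`, `a₀ > 0`, any `n ≥ 1` and any reals `a₁,…,aₙ ∈ [0,a]`:
`Σ_{i=1}^n aᵢ/√(a₀ + Σ_{j=1}^{i−1} aⱼ) ≤ 2a/√a₀ + 3√a + 3√(a₀ + Σ_{i=1}^{n−1} aᵢ)`. -/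
theorem sqrt_sum_reversed_upper_bound
    (abar : ℝ) (habar : 0 < abar) (a₀ : ℝ) (ha₀ : 0 < a₀)
    (n : ℕ) (hn : 1 ≤ n) (a : ℕ → ℝ)
    (ha : ∀ i ∈ Finset.Icc 1 n, a i ∈ Set.Icc (0 : ℝ) abar) :
    ∑ i ∈ Finset.Icc 1 n, a i / Real.sqrt (a₀ + ∑ j ∈ Finset.Ico 1 i, a j) ≤
      2 * abar / Real.sqrt a₀ + 3 * Real.sqrt abar +
        3 * Real.sqrt (a₀ + ∑ i ∈ Finset.Icc 1 (n - 1), a i) := by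
  have hsa₀ : 0 < Real.sqrt a₀ := Real.sqrt_pos.2 ha₀
  set S : ℕ → ℝ := fun i => a₀ + ∑ j ∈ Finset.Ico 1 i, a j with hSdef
  have hanneg : ∀ i ∈ Finset.Icc 1 n, 0 ≤ a i := fun i hi => (ha i hi).1
  have hale : ∀ i ∈ Finset.Icc 1 n, a i ≤ abar := fun i hi => (ha i hi).2
  have hSge : ∀ i, i ≤ n + 1 → a₀ ≤ S i := by
    intro i hi
    have h : 0 ≤ ∑ j ∈ Finset.Ico 1 i, a j := by
      apply Finset.sum_nonneg
      intro j hj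
      have hj' := Finset.mem_Ico.1 hj
      exact hanneg j (Finset.mem_Icc.2 ⟨hj'.1, by omega⟩)
    simp only [hSdef]
    linarith
  have hSsucc : ∀ i, 1 ≤ i → S (i + 1) = S i + a i := by
    intro i hi
    simp only [hSdef]
    rw [Finset.sum_Ico_succ_top hi]
    ring
  set g : ℕ → ℝ := fun i => Real.sqrt (S i) with hgdef
  -- telescoping sum
  have htel : ∀ N : ℕ, ∑ i ∈ Finset.Icc 1 N, (g (i + 1) - g i) = g (N + 1) - g 1 := by
    intro N
    induction N with
    | zero => simp
    | succ k ih =>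
      rw [Finset.sum_Icc_succ_top (by omega), ih]
      ring
  have hg1 : g 1 = Real.sqrt a₀ := by simp [hgdef, hSdef]
  -- key per-term bound
  have hkey : ∀ i ∈ Finset.Icc 1 n, a i / Real.sqrt (S i) ≤
      (if S i ≤ abar then a i / Real.sqrt a₀ else 0)
        + 2 * Real.sqrt 2 * (g (i + 1) - g i) := by
    intro i hi
    obtain ⟨h1i, hin⟩ := Finset.mem_Icc.1 hi
    have hai0 : 0 ≤ a i := hanneg i hi
    have haib : a i ≤ abar := hale i hi
    have hSi : a₀ ≤ S i := hSge i (by omega)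
    have hSi1 : a₀ ≤ S (i + 1) := hSge (i + 1) (by omega)
    have hstep : S (i + 1) = S i + a i := hSsucc i h1i
    have hss' : g i ≤ g (i + 1) := Real.sqrt_le_sqrt (by rw [hstep]; linarith)
    have h2nn : (0 : ℝ) ≤ Real.sqrt 2 := Real.sqrt_nonneg 2
    by_cases hc : S i ≤ abar
    · rw [if_pos hc]
      have h1 : a i / Real.sqrt (S i) ≤ a i / Real.sqrt a₀ :=
        div_le_div_of_nonneg_left hai0 hsa₀ (Real.sqrt_le_sqrt hSi)
      nlinarith [mul_nonneg h2nn (sub_nonneg.2 hss')]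
    · rw [if_neg hc, zero_add]
      push_neg at hc
      have hsS : 0 < S i := lt_trans habar hc
      have hs : 0 < Real.sqrt (S i) := Real.sqrt_pos.2 hsS
      have hs' : 0 < Real.sqrt (S (i + 1)) := Real.sqrt_pos.2 (by linarith)
      have hs2 : Real.sqrt (S i) ^ 2 = S i := Real.sq_sqrt hsS.le
      have hs'2 : Real.sqrt (S (i + 1)) ^ 2 = S (i + 1) := Real.sq_sqrt (by linarith)
      have h2 : Real.sqrt (S (i + 1)) ≤ Real.sqrt 2 * Real.sqrt (S i) := by
        rw [← Real.sqrt_mul (by norm_num : (0:ℝ) ≤ 2)]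
        exact Real.sqrt_le_sqrt (by rw [hstep]; linarith)
      have hsqrt2 : Real.sqrt 2 ^ 2 = 2 := Real.sq_sqrt (by norm_num)
      have h12 : (1 : ℝ) ≤ Real.sqrt 2 := by nlinarith
      have hgi : g i = Real.sqrt (S i) := rfl
      have hgi1 : g (i + 1) = Real.sqrt (S (i + 1)) := rfl
      rw [hgi, hgi1, div_le_iff₀ hs]
      have hsum : Real.sqrt (S (i + 1)) + Real.sqrt (S i) ≤
          2 * Real.sqrt 2 * Real.sqrt (S i) := by nlinarith
      have hmono : Real.sqrt (S i) ≤ Real.sqrt (S (i + 1)) :=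
        Real.sqrt_le_sqrt (by rw [hstep]; linarith)
      nlinarith [mul_le_mul_of_nonneg_left hsum (sub_nonneg.2 hmono)]
  -- early part bound
  have hEsum : ∑ i ∈ Finset.Icc 1 n, (if S i ≤ abar then a i / Real.sqrt a₀ else 0)
      ≤ 2 * abar / Real.sqrt a₀ := by
    rw [← Finset.sum_filter]
    set E := (Finset.Icc 1 n).filter (fun i => S i ≤ abar) with hEdef
    rcases E.eq_empty_or_nonempty with hE | hE
    · rw [hE]
      simp
      positivity
    · set m := E.max' hE with hmdef
      have hmE : m ∈ E := E.max'_mem hE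
      have hmIcc : m ∈ Finset.Icc 1 n := (Finset.mem_filter.1 hmE).1
      have hmS : S m ≤ abar := (Finset.mem_filter.1 hmE).2
      obtain ⟨h1m, hmn⟩ := Finset.mem_Icc.1 hmIcc
      have hsub : E ⊆ Finset.Icc 1 m := by
        intro x hx
        have hx1 := Finset.mem_Icc.1 (Finset.mem_filter.1 hx).1
        exact Finset.mem_Icc.2 ⟨hx1.1, Finset.le_max' E x hx⟩
      have hsumle : ∑ i ∈ E, a i ≤ ∑ i ∈ Finset.Icc 1 m, a i := by
        apply Finset.sum_le_sum_of_subset_of_nonneg hsub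
        intro i hi _
        have hi' := Finset.mem_Icc.1 hi
        exact hanneg i (Finset.mem_Icc.2 ⟨hi'.1, le_trans hi'.2 hmn⟩)
      have hval : ∑ i ∈ Finset.Icc 1 m, a i = S (m + 1) - a₀ := by
        simp only [hSdef]
        rw [← Finset.Ico_add_one_right_eq_Icc]
        ring
      have ham : a m ≤ abar := hale m hmIcc
      have htot : ∑ i ∈ E, a i ≤ 2 * abar := by
        rw [hval, hSsucc m h1m] at hsumle
        linarith
      rw [← Finset.sum_div]
      rw [div_le_div_iff₀ hsa₀ hsa₀]
      nlinarith [Finset.sum_nonneg (fun i hi => hanneg i ((Finset.mem_filter.1 hi).1) : ∀ i ∈ E, 0 ≤ a i)]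
  -- assemble
  have hmain : ∑ i ∈ Finset.Icc 1 n, a i / Real.sqrt (S i) ≤
      2 * abar / Real.sqrt a₀ + 2 * Real.sqrt 2 * (g (n + 1) - Real.sqrt a₀) := by
    calc ∑ i ∈ Finset.Icc 1 n, a i / Real.sqrt (S i)
        ≤ ∑ i ∈ Finset.Icc 1 n, ((if S i ≤ abar then a i / Real.sqrt a₀ else 0)
            + 2 * Real.sqrt 2 * (g (i + 1) - g i)) := Finset.sum_le_sum hkey
      _ = (∑ i ∈ Finset.Icc 1 n, (if S i ≤ abar then a i / Real.sqrt a₀ else 0))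
            + 2 * Real.sqrt 2 * (g (n + 1) - g 1) := by
          rw [Finset.sum_add_distrib, ← Finset.mul_sum, htel n]
      _ ≤ 2 * abar / Real.sqrt a₀ + 2 * Real.sqrt 2 * (g (n + 1) - Real.sqrt a₀) := by
          rw [hg1]
          linarith [hEsum]
  -- identify RHS sqrt term with g n
  have hIcc : Finset.Icc 1 (n - 1) = Finset.Ico 1 n := by
    ext x
    simp only [Finset.mem_Icc, Finset.mem_Ico]
    omega
  have hRHS : a₀ + ∑ i ∈ Finset.Icc 1 (n - 1), a i = S n := by
    rw [hIcc]
  -- final numeric estimate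
  have hgn1 : g (n + 1) ≤ g n + Real.sqrt abar := by
    have hstep : S (n + 1) = S n + a n := hSsucc n hn
    have hSn : a₀ ≤ S n := hSge n (by omega)
    have han : a n ≤ abar := hale n (Finset.mem_Icc.2 ⟨hn, le_refl n⟩)
    have h1 : g (n + 1) ≤ Real.sqrt (S n + abar) := Real.sqrt_le_sqrt (by rw [hstep]; linarith)
    have h2 : Real.sqrt (S n + abar) ≤ Real.sqrt (S n) + Real.sqrt abar :=
      sqrt_add_le_aux (S n) abar (by linarith) habar.le
    exact le_trans h1 h2
  have hsqrt2 : Real.sqrt 2 ≤ 3 / 2 := by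
    nlinarith [Real.sq_sqrt (by norm_num : (0:ℝ) ≤ 2), Real.sqrt_nonneg 2]
  have h2nn : (0 : ℝ) ≤ Real.sqrt 2 := Real.sqrt_nonneg 2
  have hgnn : 0 ≤ g n := Real.sqrt_nonneg _
  have habn : 0 ≤ Real.sqrt abar := Real.sqrt_nonneg _
  have hfinal : 2 * abar / Real.sqrt a₀ + 2 * Real.sqrt 2 * (g (n + 1) - Real.sqrt a₀) ≤
      2 * abar / Real.sqrt a₀ + 3 * Real.sqrt abar + 3 * g n := by
    nlinarith [mul_le_mul_of_nonneg_left hgn1 (by positivity : (0:ℝ) ≤ 2 * Real.sqrt 2),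
      mul_nonneg h2nn hsa₀.le, mul_le_mul_of_nonneg_right hsqrt2 hgnn,
      mul_le_mul_of_nonneg_right hsqrt2 habn]
  calc ∑ i ∈ Finset.Icc 1 n, a i / Real.sqrt (a₀ + ∑ j ∈ Finset.Ico 1 i, a j)
      = ∑ i ∈ Finset.Icc 1 n, a i / Real.sqrt (S i) := rfl
    _ ≤ 2 * abar / Real.sqrt a₀ + 2 * Real.sqrt 2 * (g (n + 1) - Real.sqrt a₀) := hmain
    _ ≤ 2 * abar / Real.sqrt a₀ + 3 * Real.sqrt abar + 3 * g n := hfinal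
    _ = 2 * abar / Real.sqrt a₀ + 3 * Real.sqrt abar +
        3 * Real.sqrt (a₀ + ∑ i ∈ Finset.Icc 1 (n - 1), a i) := by rw [hgdef]; simp only [hRHS]
end

section
/- For any a > 0, a₀ > 0, any n ≥ 1 and any real numbers a₁, …, a_n ∈ [0, a]: Σ_{i=1}^{n} a_i / (a₀ + Σ_{j=1}^{i−1} a_j) ≤ 2 + 4a/a₀ + 2 log( 1 + (Σ_{i=1}^{n−1} a_i)/a₀ ). -/
lemma half_le_log_aux {t : ℝ} (h0 : 0 ≤ t) (h1 : t ≤ 1) : t ≤ 2 * Real.log (1 + t) := by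
  have hpos : (0 : ℝ) < 1 + t := by linarith
  have hexp : Real.exp (t / 2) ≤ 1 + t := by
    have h2 : 1 - t / 2 ≤ Real.exp (-(t / 2)) := by
      have := Real.add_one_le_exp (-(t / 2)); linarith
    have h3 : Real.exp (t / 2) * Real.exp (-(t / 2)) = 1 := by
      rw [← Real.exp_add]; ring_nf; exact Real.exp_zero
    nlinarith [Real.exp_pos (t / 2), Real.exp_pos (-(t / 2))]
  have := (Real.le_log_iff_exp_le hpos).2 hexp
  linarith

lemma IccIco_aux {n : ℕ} (hn : 1 ≤ n) :
    Finset.Icc 1 (n - 1) = Finset.Ico 1 n := by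
  ext x; simp only [Finset.mem_Icc, Finset.mem_Ico]; omega

lemma telescope_aux (g : ℕ → ℝ) : ∀ n, 1 ≤ n →
    ∑ i ∈ Finset.Ico 1 n, (g (i + 1) - g i) = g n - g 1 := by
  intro n hn
  induction n with
  | zero => omega
  | succ m ih =>
    rcases Nat.lt_or_ge 1 (m + 1) with h | h
    · have hm : 1 ≤ m := by omega
      rw [Finset.sum_Ico_succ_top hm, ih hm]; ring
    · have : m = 0 := by omega
      subst this; simp

/-- For any `a > 0`, `a₀ > 0`, any `n ≥ 1` and any reals `a₁,…,aₙ ∈ [0,a]`: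
`Σ_{i=1}^n aᵢ/(a₀ + Σ_{j=1}^{i−1} aⱼ) ≤ 2 + 4a/a₀ + 2 log(1 + (Σ_{i=1}^{n−1} aᵢ)/a₀)`. -/
theorem log_sum_upper_bound
    (abar : ℝ) (habar : 0 < abar) (a₀ : ℝ) (ha₀ : 0 < a₀)
    (n : ℕ) (hn : 1 ≤ n) (a : ℕ → ℝ)
    (ha : ∀ i ∈ Finset.Icc 1 n, a i ∈ Set.Icc (0 : ℝ) abar) :
    ∑ i ∈ Finset.Icc 1 n, a i / (a₀ + ∑ j ∈ Finset.Ico 1 i, a j) ≤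
      2 + 4 * abar / a₀ +
        2 * Real.log (1 + (∑ i ∈ Finset.Icc 1 (n - 1), a i) / a₀) := by
  set S : ℕ → ℝ := fun i => a₀ + ∑ j ∈ Finset.Ico 1 i, a j with hS
  have key : ∀ i, a₀ + ∑ j ∈ Finset.Ico 1 i, a j = S i := fun i => rfl
  have hanneg : ∀ i ∈ Finset.Icc 1 n, 0 ≤ a i := fun i hi => (ha i hi).1
  have haub : ∀ i ∈ Finset.Icc 1 n, a i ≤ abar := fun i hi => (ha i hi).2
  have hn' : n - 1 + 1 = n := by omega
  have hSge : ∀ i, i ≤ n → a₀ ≤ S i := by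
    intro i hi
    have h0 : 0 ≤ ∑ j ∈ Finset.Ico 1 i, a j := by
      apply Finset.sum_nonneg
      intro j hj
      rw [Finset.mem_Ico] at hj
      exact hanneg j (Finset.mem_Icc.2 ⟨hj.1, by omega⟩)
    simp only [hS]; linarith
  have hSpos : ∀ i, i ≤ n → 0 < S i := fun i hi => lt_of_lt_of_le ha₀ (hSge i hi)
  have hSsucc : ∀ i, 1 ≤ i → S (i + 1) = S i + a i := by
    intro i hi
    simp only [hS]
    rw [Finset.sum_Ico_succ_top hi]
    ring
  have hS1 : S 1 = a₀ := by simp [hS]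
  -- decompose the sum
  have hdecomp : ∑ i ∈ Finset.Icc 1 n, a i / S i
      = (∑ i ∈ Finset.Icc 1 (n - 1), a i / S i) + a n / S n := by
    conv_lhs => rw [← hn']
    rw [Finset.sum_Icc_succ_top (by omega : 1 ≤ n - 1 + 1), hn']
  -- last term
  have hlast : a n / S n ≤ abar / a₀ :=
    div_le_div₀ habar.le (haub n (Finset.mem_Icc.2 ⟨hn, le_rfl⟩)) ha₀ (hSge n le_rfl)
  set T := Finset.Icc 1 (n - 1) with hT
  set p : ℕ → Prop := fun i => S i ≤ a₀ + abar with hp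
  have hmemT : ∀ i ∈ T, 1 ≤ i ∧ i ≤ n - 1 := by
    intro i hi; rw [hT, Finset.mem_Icc] at hi; exact hi
  have hmemTn : ∀ i ∈ T, i ∈ Finset.Icc 1 n := by
    intro i hi
    obtain ⟨h1, h2⟩ := hmemT i hi
    exact Finset.mem_Icc.2 ⟨h1, by omega⟩
  classical
  have hfilter := Finset.sum_filter_add_sum_filter_not T p (fun i => a i / S i)
  -- bucket A : small prefix sums
  have hA : ∑ i ∈ T.filter p, a i / S i ≤ 2 * abar / a₀ := by
    have step1 : ∑ i ∈ T.filter p, a i / S i ≤ (∑ i ∈ T.filter p, a i) / a₀ := by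
      rw [Finset.sum_div]
      apply Finset.sum_le_sum
      intro i hi
      have hiT := (Finset.mem_filter.1 hi).1
      obtain ⟨h1, h2⟩ := hmemT i hiT
      exact div_le_div₀ (hanneg i (hmemTn i hiT)) le_rfl ha₀ (hSge i (by omega))
    have step2 : ∑ i ∈ T.filter p, a i ≤ 2 * abar := by
      by_cases hAe : (T.filter p).Nonempty
      · set m := (T.filter p).max' hAe with hm
        have hmmem := (T.filter p).max'_mem hAe
        have hmT := (Finset.mem_filter.1 hmmem).1
        have hmp : S m ≤ a₀ + abar := (Finset.mem_filter.1 hmmem).2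
        obtain ⟨hm1, hm2⟩ := hmemT m hmT
        have hsub : T.filter p ⊆ Finset.Icc 1 m := by
          intro i hi
          have hiT := (Finset.mem_filter.1 hi).1
          exact Finset.mem_Icc.2 ⟨(hmemT i hiT).1, Finset.le_max' _ i hi⟩
        have hle1 : ∑ i ∈ T.filter p, a i ≤ ∑ i ∈ Finset.Icc 1 m, a i := by
          apply Finset.sum_le_sum_of_subset_of_nonneg hsub
          intro i hi _
          rw [Finset.mem_Icc] at hi
          exact hanneg i (Finset.mem_Icc.2 ⟨hi.1, by omega⟩)
        have heq : ∑ i ∈ Finset.Icc 1 m, a i = S (m + 1) - a₀ := by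
          simp only [hS]
          rw [Finset.Ico_add_one_right_eq_Icc]
          ring
        have hsm : S (m + 1) = S m + a m := hSsucc m hm1
        have ham : a m ≤ abar := haub m (Finset.mem_Icc.2 ⟨hm1, by omega⟩)
        rw [heq, hsm] at hle1
        linarith
      · rw [Finset.not_nonempty_iff_eq_empty.1 hAe, Finset.sum_empty]
        positivity
    calc ∑ i ∈ T.filter p, a i / S i ≤ (∑ i ∈ T.filter p, a i) / a₀ := step1
      _ ≤ 2 * abar / a₀ := by gcongr
  -- bucket B : large prefix sums, use logarithmic bound and telescoping
  have hB : ∑ i ∈ T.filter (fun i => ¬ p i), a i / S i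
      ≤ 2 * (Real.log (S n) - Real.log (S 1)) := by
    have hstep : ∀ i ∈ T.filter (fun i => ¬ p i),
        a i / S i ≤ 2 * (Real.log (S (i + 1)) - Real.log (S i)) := by
      intro i hi
      obtain ⟨hiT, hip⟩ := Finset.mem_filter.1 hi
      obtain ⟨h1, h2⟩ := hmemT i hiT
      have hin : i ≤ n := by omega
      have hSi : 0 < S i := hSpos i hin
      have hSi1 : 0 < S (i + 1) := hSpos (i + 1) (by omega)
      have hSbig : a₀ + abar < S i := by
        simpa [hp] using hip
      have hai0 : 0 ≤ a i := hanneg i (hmemTn i hiT)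
      have haiu : a i ≤ abar := haub i (hmemTn i hiT)
      have ht0 : 0 ≤ a i / S i := by positivity
      have ht1 : a i / S i ≤ 1 := by
        rw [div_le_one hSi]; linarith
      have hlog := half_le_log_aux ht0 ht1
      have heq : Real.log (1 + a i / S i) = Real.log (S (i + 1)) - Real.log (S i) := by
        rw [← Real.log_div (ne_of_gt hSi1) (ne_of_gt hSi)]
        congr 1
        rw [hSsucc i h1]
        field_simp
      rw [heq] at hlog
      exact hlog
    calc ∑ i ∈ T.filter (fun i => ¬ p i), a i / S i
        ≤ ∑ i ∈ T.filter (fun i => ¬ p i),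
            2 * (Real.log (S (i + 1)) - Real.log (S i)) :=
          Finset.sum_le_sum hstep
      _ ≤ ∑ i ∈ T, 2 * (Real.log (S (i + 1)) - Real.log (S i)) := by
          apply Finset.sum_le_sum_of_subset_of_nonneg (Finset.filter_subset _ _)
          intro i hi _
          obtain ⟨h1, h2⟩ := hmemT i hi
          have hin : i ≤ n := by omega
          have hmono : S i ≤ S (i + 1) := by
            rw [hSsucc i h1]
            have := hanneg i (hmemTn i hi)
            linarith
          have := Real.log_le_log (hSpos i hin) hmono
          linarith
      _ = 2 * ∑ i ∈ T, (Real.log (S (i + 1)) - Real.log (S i)) := by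
          rw [Finset.mul_sum]
      _ = 2 * (Real.log (S n) - Real.log (S 1)) := by
          rw [hT, IccIco_aux hn, telescope_aux (fun i => Real.log (S i)) n hn]
  -- identify the log term
  have hlogeq : Real.log (S n) - Real.log (S 1)
      = Real.log (1 + (∑ i ∈ Finset.Icc 1 (n - 1), a i) / a₀) := by
    rw [hS1, ← Real.log_div (ne_of_gt (hSpos n le_rfl)) (ne_of_gt ha₀)]
    congr 1
    rw [IccIco_aux hn]
    simp only [hS]
    field_simp
  -- combine
  simp only [key]
  rw [hdecomp, ← hfilter]
  simp only [hT] at *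
  rw [hlogeq] at hB
  have habar0 : 0 < abar / a₀ := by positivity
  have h2a : (2:ℝ) * abar / a₀ = 2 * (abar / a₀) := by ring
  have h4a : (4:ℝ) * abar / a₀ = 4 * (abar / a₀) := by ring
  rw [h2a] at hA
  rw [h4a]
  linarith
end

section
/- For any a > 0, any n ≥ 1 and any real numbers a₁, …, a_n ∈ [0, a]: Σ_{i=1}^{n} a_i / √(a + Σ_{j=1}^{i−1} a_j) ≤ 2√a + 2√(a + Σ_{i=1}^{n−1} a_i). -/
lemma key_step (c s d : ℝ) (hc : 0 < c) (hs : 0 ≤ s) (hd : 0 ≤ d) (hdc : d ≤ c) :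
    d / Real.sqrt (c + s) ≤ 2 * (Real.sqrt (s + d) - Real.sqrt s) := by
  have hcs : (0:ℝ) < c + s := by linarith
  have h1 : 0 < Real.sqrt (c + s) := Real.sqrt_pos.2 hcs
  have hsd : (0:ℝ) ≤ s + d := by linarith
  have hu := Real.sq_sqrt hsd
  have hv := Real.sq_sqrt hs
  have hw := Real.sq_sqrt hcs.le
  have hu0 := Real.sqrt_nonneg (s + d)
  have hv0 := Real.sqrt_nonneg s
  have hmono : Real.sqrt (s + d) ≤ Real.sqrt (c + s) := Real.sqrt_le_sqrt (by linarith)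
  have huv : Real.sqrt s ≤ Real.sqrt (s + d) := Real.sqrt_le_sqrt (by linarith)
  rw [div_le_iff₀ h1]
  nlinarith [mul_nonneg (sub_nonneg.2 huv) (sub_nonneg.2 hmono),
    sq_nonneg (Real.sqrt (s + d) - Real.sqrt s), mul_nonneg hu0 hv0]

lemma aux_bound (abar : ℝ) (habar : 0 < abar) (a : ℕ → ℝ) :
    ∀ n : ℕ, (∀ i ∈ Finset.Icc 1 n, a i ∈ Set.Icc (0 : ℝ) abar) →
      ∑ i ∈ Finset.Icc 1 n, a i / Real.sqrt (abar + ∑ j ∈ Finset.Ico 1 i, a j) ≤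
        2 * Real.sqrt (∑ i ∈ Finset.Icc 1 n, a i) := by
  intro n
  induction n with
  | zero => simp
  | succ n ih =>
    intro h
    have hsub : ∀ i ∈ Finset.Icc 1 n, a i ∈ Set.Icc (0 : ℝ) abar := by
      intro i hi
      apply h
      simp only [Finset.mem_Icc] at hi ⊢
      omega
    have hmem := h (n + 1) (by simp)
    have hS : 0 ≤ ∑ i ∈ Finset.Icc 1 n, a i :=
      Finset.sum_nonneg fun i hi => (hsub i hi).1
    rw [Finset.sum_Icc_succ_top (by omega : 1 ≤ n + 1),
      Finset.sum_Icc_succ_top (by omega : 1 ≤ n + 1)]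
    have hIco : Finset.Ico 1 (n + 1) = Finset.Icc 1 n := Finset.Ico_add_one_right_eq_Icc 1 n
    rw [hIco]
    have hkey := key_step abar (∑ i ∈ Finset.Icc 1 n, a i) (a (n + 1)) habar hS
      hmem.1 hmem.2
    have hih := ih hsub
    linarith
/-- For any `a > 0`, any `n ≥ 1` and any reals `a₁,…,aₙ ∈ [0,a]`:
`Σ_{i=1}^n aᵢ/√(a + Σ_{j=1}^{i−1} aⱼ) ≤ 2√a + 2√(a + Σ_{i=1}^{n−1} aᵢ)`. -/
theorem sqrt_sum_reversed_simple_upper_bound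
    (abar : ℝ) (habar : 0 < abar)
    (n : ℕ) (hn : 1 ≤ n) (a : ℕ → ℝ)
    (ha : ∀ i ∈ Finset.Icc 1 n, a i ∈ Set.Icc (0 : ℝ) abar) :
    ∑ i ∈ Finset.Icc 1 n, a i / Real.sqrt (abar + ∑ j ∈ Finset.Ico 1 i, a j) ≤
      2 * Real.sqrt abar + 2 * Real.sqrt (abar + ∑ i ∈ Finset.Icc 1 (n - 1), a i) := by
  have hmain := aux_bound abar habar a n ha
  have hn' : n = (n - 1) + 1 := by omega
  have hmemn := ha n (by simp [hn])
  have hT : 0 ≤ ∑ i ∈ Finset.Icc 1 (n - 1), a i := by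
    apply Finset.sum_nonneg
    intro i hi
    simp only [Finset.mem_Icc] at hi
    exact (ha i (by simp only [Finset.mem_Icc]; omega)).1
  have hsplit : ∑ i ∈ Finset.Icc 1 n, a i
      = (∑ i ∈ Finset.Icc 1 (n - 1), a i) + a n := by
    conv_lhs => rw [hn']
    rw [Finset.sum_Icc_succ_top (by omega : 1 ≤ (n - 1) + 1)]
    rw [← hn']
  have h2 : Real.sqrt (∑ i ∈ Finset.Icc 1 n, a i)
      ≤ Real.sqrt (abar + ∑ i ∈ Finset.Icc 1 (n - 1), a i) := by
    apply Real.sqrt_le_sqrt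
    rw [hsplit]
    linarith [hmemn.2]
  have h3 : 0 ≤ Real.sqrt abar := Real.sqrt_nonneg _
  linarith
end

section
/- Let U ⊆ ℝ^{d₁} and V ⊆ ℝ^{d₂} be convex sets, let ‖·‖_U, ‖·‖_V be norms on ℝ^{d₁}, ℝ^{d₂} with dual norms ‖·‖_U*, ‖·‖_V*, and let D_U, D_V > 0. Let φ : U × V → ℝ be differentiable and suppose there are constants L₁₁, L₁₂, L₂₁, L₂₂ ≥ 0 such that for all u, u' ∈ U and v, v' ∈ V: ‖∇_u φ(u,v) − ∇_u φ(u',v)‖_U* ≤ L₁₁‖u−u'‖_U, ‖∇_u φ(u,v) − ∇_u φ(u,v')‖_U* ≤ L₁₂‖v−v'‖_V, ‖∇_v φ(u,v) − ∇_v φ(u,v')‖_V* ≤ L₂₂‖v−v'‖_V, and ‖∇_v φ(u,v) − ∇_v φ(u',v)‖_V* ≤ L₂₁‖u−u'‖_U. Define F(x) := (∇_u φ(u,v), −∇_v φ(u,v)) for x = (u,v) ∈ U × V, the norm ‖(u,v)‖_K := √( ‖u‖_U²/D_U² + ‖v‖_V²/D_V² ), and the dual quantity ‖(g,h)‖_K*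 := √( D_U²(‖g‖_U*)² + D_V²(‖h‖_V*)² ). Then for all x, x' ∈ U × V: ‖F(x) − F(x')‖_K* ≤ L ‖x − x'‖_K, where L := 2 max{ L₁₁ D_U², L₂₂ D_V², L₁₂ D_U D_V, L₂₁ D_U D_V }. -/
/-- The dual norm `‖g‖_* = sup_{‖x‖ ≤ 1} g·x` of a norm `nrm` on `ℝ^d`. -/
noncomputable def dualNorm {d : ℕ} (nrm : (Fin d → ℝ) → ℝ) (g : Fin d → ℝ) : ℝ :=
  sSup ((fun x => dot g x) '' {x | nrm x ≤ 1})

/-- The partial gradient of `φ(u,v)` w.r.t. the first block of variables, as a vector. -/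
noncomputable def gradFst {d₁ d₂ : ℕ} (φ : (Fin d₁ → ℝ) → (Fin d₂ → ℝ) → ℝ)
    (u : Fin d₁ → ℝ) (v : Fin d₂ → ℝ) : Fin d₁ → ℝ :=
  fun i => fderiv ℝ (fun u' => φ u' v) u (Pi.single i 1)

/-- The partial gradient of `φ(u,v)` w.r.t. the second block of variables, as a vector. -/
noncomputable def gradSnd {d₁ d₂ : ℕ} (φ : (Fin d₁ → ℝ) → (Fin d₂ → ℝ) → ℝ)
    (u : Fin d₁ → ℝ) (v : Fin d₂ → ℝ) : Fin d₂ → ℝ :=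
  fun j => fderiv ℝ (fun v' => φ u v') v (Pi.single j 1)

/-! The norms `nU`, `nV` are seminorms, hence convex and so continuous in finite dimension;
being definite, they dominate a multiple of the ambient norm by compactness of the unit sphere.
So every dual norm is a finite supremum, and it is subadditive. Passing from `(u, v)` to
`(u', v')` through `(u', v)`, resp. `(u, v')`, bounds the two dual norms by `L₁₁ a + L₁₂ b` and
`L₂₁ a + L₂₂ b`, where `a = nU (u - u')`, `b = nV (v - v')`. With `s = a / DU`, `t = b / DV`
both weighted components are at most `M (s + t)`, `M` the maximum in the statement, and
`(s + t)² ≤ 2 (s² + t²)` yields the factor `2`. -/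

namespace Seminorm

variable {E : Type*} [NormedAddCommGroup E] [NormedSpace ℝ E] [FiniteDimensional ℝ E]
  (p : Seminorm ℝ E)

protected theorem continuous_of_finiteDimensional : Continuous p :=
  continuousOn_univ.mp (p.convexOn.continuousOn isOpen_univ)

theorem exists_pos_mul_norm_le (hp : ∀ x, p x = 0 → x = 0) :
    ∃ m : ℝ, 0 < m ∧ ∀ x, m * ‖x‖ ≤ p x := by
  rcases subsingleton_or_nontrivial E with _ | _
  · exact ⟨1, one_pos, fun x => by simp [Subsingleton.elim x 0]⟩
  obtain ⟨x₀, hx₀, hmin⟩ := (isCompact_sphere (0 : E) 1).exists_isMinOn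
    (NormedSpace.sphere_nonempty.mpr zero_le_one) p.continuous_of_finiteDimensional.continuousOn
  rw [mem_sphere_zero_iff_norm] at hx₀
  have hx₀_pos : 0 < p x₀ :=
    (apply_nonneg p x₀).lt_of_ne fun h => by simp [hp x₀ h.symm] at hx₀
  refine ⟨p x₀, hx₀_pos, fun x => ?_⟩
  rcases eq_or_ne x 0 with rfl | hx
  · simp
  have hx_pos : 0 < ‖x‖ := norm_pos_iff.mpr hx
  have hmin_x : p x₀ ≤ p (‖x‖⁻¹ • x) := hmin (by simp [norm_smul, hx_pos.ne'])
  rw [map_smul_eq_mul, norm_inv, norm_norm] at hmin_x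
  rwa [← le_div_iff₀ hx_pos, div_eq_inv_mul]

theorem bddAbove_image_unitBall (hp : ∀ x, p x = 0 → x = 0) (ℓ : E →ₗ[ℝ] ℝ) :
    BddAbove (ℓ '' {x | p x ≤ 1}) := by
  obtain ⟨m, hm, hle⟩ := p.exists_pos_mul_norm_le hp
  set ℓc := LinearMap.toContinuousLinearMap ℓ
  refine ⟨‖ℓc‖ / m, ?_⟩
  rintro _ ⟨x, hx, rfl⟩
  calc ℓ x ≤ ‖ℓc x‖ := le_abs_self _
    _ ≤ ‖ℓc‖ * ‖x‖ := ℓc.le_opNorm x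
    _ ≤ ‖ℓc‖ * (1 / m) := by
        gcongr
        rw [le_div_iff₀ hm, mul_comm]
        exact (hle x).trans hx
    _ = ‖ℓc‖ / m := by ring

end Seminorm

section DualNorm

variable {d : ℕ} (p : Seminorm ℝ (Fin d → ℝ))

-- Without this bound `dualNorm` would be the junk value `sSup` of an unbounded set, namely `0`.
theorem bddAbove_dot_image (hp : ∀ x, p x = 0 → x = 0) (g : Fin d → ℝ) :
    BddAbove ((fun x => dot g x) '' {x | p x ≤ 1}) :=
  p.bddAbove_image_unitBall hp (dotProductBilin ℝ ℝ g)

theorem dot_le_dualNorm (hp : ∀ x, p x = 0 → x = 0) (g : Fin d → ℝ) {x : Fin d → ℝ}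
    (hx : p x ≤ 1) :
    dot g x ≤ dualNorm p g :=
  le_csSup (bddAbove_dot_image p hp g) ⟨x, hx, rfl⟩

theorem dualNorm_nonneg (hp : ∀ x, p x = 0 → x = 0) (g : Fin d → ℝ) : 0 ≤ dualNorm p g := by
  simpa [dot] using dot_le_dualNorm p hp g (x := 0) (by simp)

theorem dualNorm_add_le (hp : ∀ x, p x = 0 → x = 0) (g h : Fin d → ℝ) :
    dualNorm p (g + h) ≤ dualNorm p g + dualNorm p h := by
  refine csSup_le ⟨0, 0, by simp, by simp [dot]⟩ ?_
  rintro _ ⟨x, hx, rfl⟩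
  have hsplit : dot (g + h) x = dot g x + dot h x := by
    simp only [dot, Pi.add_apply, add_mul, Finset.sum_add_distrib]
  change dot (g + h) x ≤ _
  rw [hsplit]
  exact add_le_add (dot_le_dualNorm p hp g hx) (dot_le_dualNorm p hp h hx)

theorem dualNorm_sub_le_add (hp : ∀ x, p x = 0 → x = 0) (f g h : Fin d → ℝ) :
    dualNorm p (f - h) ≤ dualNorm p (f - g) + dualNorm p (g - h) := by
  simpa only [sub_add_sub_cancel] using dualNorm_add_le p hp (f - g) (g - h)

end DualNorm

theorem sqrt_sq_add_sq_le_two_mul_sqrt {X Y M s t : ℝ} (hX : 0 ≤ X) (hY : 0 ≤ Y) (hM : 0 ≤ M)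
    (hXM : X ≤ M * (s + t)) (hYM : Y ≤ M * (s + t)) :
    √(X ^ 2 + Y ^ 2) ≤ 2 * M * √(s ^ 2 + t ^ 2) := by
  have hX2 : X ^ 2 ≤ (M * (s + t)) ^ 2 := pow_le_pow_left₀ hX hXM 2
  have hY2 : Y ^ 2 ≤ (M * (s + t)) ^ 2 := pow_le_pow_left₀ hY hYM 2
  have hst : (s + t) ^ 2 ≤ 2 * (s ^ 2 + t ^ 2) := by nlinarith [sq_nonneg (s - t)]
  calc √(X ^ 2 + Y ^ 2) ≤ √((2 * M) ^ 2 * (s ^ 2 + t ^ 2)) := by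
        gcongr
        nlinarith [mul_le_mul_of_nonneg_left hst (sq_nonneg M)]
    _ = 2 * M * √(s ^ 2 + t ^ 2) := by
        rw [Real.sqrt_mul (sq_nonneg _), Real.sqrt_sq (by positivity)]

theorem sqrt_weighted_le_two_max_mul {A B a b DU DV L₁₁ L₁₂ L₂₁ L₂₂ : ℝ}
    (hDU : 0 < DU) (hDV : 0 < DV) (hL₁₁ : 0 ≤ L₁₁) (hA : 0 ≤ A) (hB : 0 ≤ B) (ha : 0 ≤ a)
    (hb : 0 ≤ b) (hAle : A ≤ L₁₁ * a + L₁₂ * b) (hBle : B ≤ L₂₁ * a + L₂₂ * b) :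
    √(DU ^ 2 * A ^ 2 + DV ^ 2 * B ^ 2) ≤
      (2 * max (max (L₁₁ * DU ^ 2) (L₂₂ * DV ^ 2)) (max (L₁₂ * DU * DV) (L₂₁ * DU * DV))) *
        √(a ^ 2 / DU ^ 2 + b ^ 2 / DV ^ 2) := by
  set M := max (max (L₁₁ * DU ^ 2) (L₂₂ * DV ^ 2)) (max (L₁₂ * DU * DV) (L₂₁ * DU * DV))
  have hDUA : DU * A ≤ M * (a / DU + b / DV) :=
    calc DU * A ≤ DU * (L₁₁ * a + L₁₂ * b) := by gcongr
      _ = L₁₁ * DU ^ 2 * (a / DU) + L₁₂ * DU * DV * (b / DV) := by field_simp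
      _ ≤ M * (a / DU) + M * (b / DV) := by gcongr <;> simp [M]
      _ = M * (a / DU + b / DV) := by ring
  have hDVB : DV * B ≤ M * (a / DU + b / DV) :=
    calc DV * B ≤ DV * (L₂₁ * a + L₂₂ * b) := by gcongr
      _ = L₂₁ * DU * DV * (a / DU) + L₂₂ * DV ^ 2 * (b / DV) := by field_simp
      _ ≤ M * (a / DU) + M * (b / DV) := by gcongr <;> simp [M]
      _ = M * (a / DU + b / DV) := by ring
  have hM : 0 ≤ M := le_trans (by positivity) (le_max_of_le_left (le_max_left _ _))
  simpa only [mul_pow, div_pow] using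
    sqrt_sq_add_sq_le_two_mul_sqrt (by positivity) (by positivity) hM hDUA hDVB

theorem saddle_operator_smooth_general {d₁ d₂ : ℕ}
    (U : Set (Fin d₁ → ℝ)) (V : Set (Fin d₂ → ℝ))
    (nU : (Fin d₁ → ℝ) → ℝ)
    (hnUdef : ∀ z, nU z = 0 ↔ z = 0)
    (hnUsmul : ∀ (c : ℝ) z, nU (c • z) = |c| * nU z)
    (hnUtri : ∀ z w, nU (z + w) ≤ nU z + nU w)
    (nV : (Fin d₂ → ℝ) → ℝ)
    (hnVdef : ∀ z, nV z = 0 ↔ z = 0)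
    (hnVsmul : ∀ (c : ℝ) z, nV (c • z) = |c| * nV z)
    (hnVtri : ∀ z w, nV (z + w) ≤ nV z + nV w)
    (DU DV : ℝ) (hDU : 0 < DU) (hDV : 0 < DV)
    (φ : (Fin d₁ → ℝ) → (Fin d₂ → ℝ) → ℝ)
    (L₁₁ L₁₂ L₂₁ L₂₂ : ℝ)
    (hL₁₁0 : 0 ≤ L₁₁)
    (h11 : ∀ u ∈ U, ∀ u' ∈ U, ∀ v ∈ V,
      dualNorm nU (gradFst φ u v - gradFst φ u' v) ≤ L₁₁ * nU (u - u'))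
    (h12 : ∀ u ∈ U, ∀ v ∈ V, ∀ v' ∈ V,
      dualNorm nU (gradFst φ u v - gradFst φ u v') ≤ L₁₂ * nV (v - v'))
    (h22 : ∀ u ∈ U, ∀ v ∈ V, ∀ v' ∈ V,
      dualNorm nV (gradSnd φ u v - gradSnd φ u v') ≤ L₂₂ * nV (v - v'))
    (h21 : ∀ u ∈ U, ∀ u' ∈ U, ∀ v ∈ V,
      dualNorm nV (gradSnd φ u v - gradSnd φ u' v) ≤ L₂₁ * nU (u - u')) :
    ∀ u ∈ U, ∀ u' ∈ U, ∀ v ∈ V, ∀ v' ∈ V,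
      Real.sqrt (DU ^ 2 * (dualNorm nU (gradFst φ u v - gradFst φ u' v')) ^ 2 +
          DV ^ 2 * (dualNorm nV ((-gradSnd φ u v) - (-gradSnd φ u' v'))) ^ 2) ≤
        (2 * max (max (L₁₁ * DU ^ 2) (L₂₂ * DV ^ 2))
            (max (L₁₂ * DU * DV) (L₂₁ * DU * DV))) *
          Real.sqrt ((nU (u - u')) ^ 2 / DU ^ 2 + (nV (v - v')) ^ 2 / DV ^ 2) := by
  intro u hu u' hu' v hv v' hv'
  let pU : Seminorm ℝ (Fin d₁ → ℝ) := .of nU hnUtri (by simpa only [Real.norm_eq_abs])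
  let pV : Seminorm ℝ (Fin d₂ → ℝ) := .of nV hnVtri (by simpa only [Real.norm_eq_abs])
  have hpU (z) : pU z = 0 → z = 0 := (hnUdef z).mp
  have hpV (z) : pV z = 0 → z = 0 := (hnVdef z).mp
  have hFst : dualNorm nU (gradFst φ u v - gradFst φ u' v') ≤
      L₁₁ * nU (u - u') + L₁₂ * nV (v - v') :=
    (dualNorm_sub_le_add pU hpU _ (gradFst φ u' v) _).trans
      (add_le_add (h11 u hu u' hu' v hv) (h12 u' hu' v hv v' hv'))
  have hSnd : dualNorm nV ((-gradSnd φ u v) - (-gradSnd φ u' v')) ≤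
      L₂₁ * nU (u - u') + L₂₂ * nV (v - v') := by
    have hU_symm : nU (u - u') = nU (u' - u) := map_sub_rev pU u u'
    have hV_symm : nV (v - v') = nV (v' - v) := map_sub_rev pV v v'
    rw [neg_sub_neg, hU_symm, hV_symm]
    exact (dualNorm_sub_le_add pV hpV _ (gradSnd φ u v') _).trans
      (add_le_add (h21 u' hu' u hu v' hv') (h22 u hu v' hv' v hv))
  exact sqrt_weighted_le_two_max_mul hDU hDV hL₁₁0 (dualNorm_nonneg pU hpU _)
    (dualNorm_nonneg pV hpV _) (apply_nonneg pU _) (apply_nonneg pV _) hFst hSnd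

/-- Smoothness of the saddle-point operator
`F(u,v) = (∇_u φ(u,v), −∇_v φ(u,v))` w.r.t. the combined norms:
`‖F(x) − F(x')‖_K* ≤ L‖x − x'‖_K` with
`L = 2 max{L₁₁D_U², L₂₂D_V², L₁₂D_U D_V, L₂₁D_U D_V}`. -/
theorem saddle_operator_smooth {d₁ d₂ : ℕ}
    (U : Set (Fin d₁ → ℝ)) (V : Set (Fin d₂ → ℝ))
    (hU : Convex ℝ U) (hV : Convex ℝ V)
    (nU : (Fin d₁ → ℝ) → ℝ)
    (hnU0 : ∀ z, 0 ≤ nU z) (hnUdef : ∀ z, nU z = 0 ↔ z = 0)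
    (hnUsmul : ∀ (c : ℝ) z, nU (c • z) = |c| * nU z)
    (hnUtri : ∀ z w, nU (z + w) ≤ nU z + nU w)
    (nV : (Fin d₂ → ℝ) → ℝ)
    (hnV0 : ∀ z, 0 ≤ nV z) (hnVdef : ∀ z, nV z = 0 ↔ z = 0)
    (hnVsmul : ∀ (c : ℝ) z, nV (c • z) = |c| * nV z)
    (hnVtri : ∀ z w, nV (z + w) ≤ nV z + nV w)
    (DU DV : ℝ) (hDU : 0 < DU) (hDV : 0 < DV)
    (φ : (Fin d₁ → ℝ) → (Fin d₂ → ℝ) → ℝ)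
    (hφu : ∀ v, Differentiable ℝ (fun u => φ u v))
    (hφv : ∀ u, Differentiable ℝ (fun v => φ u v))
    (L₁₁ L₁₂ L₂₁ L₂₂ : ℝ)
    (hL₁₁0 : 0 ≤ L₁₁) (hL₁₂0 : 0 ≤ L₁₂) (hL₂₁0 : 0 ≤ L₂₁) (hL₂₂0 : 0 ≤ L₂₂)
    (h11 : ∀ u ∈ U, ∀ u' ∈ U, ∀ v ∈ V,
      dualNorm nU (gradFst φ u v - gradFst φ u' v) ≤ L₁₁ * nU (u - u'))
    (h12 : ∀ u ∈ U, ∀ v ∈ V, ∀ v' ∈ V,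
      dualNorm nU (gradFst φ u v - gradFst φ u v') ≤ L₁₂ * nV (v - v'))
    (h22 : ∀ u ∈ U, ∀ v ∈ V, ∀ v' ∈ V,
      dualNorm nV (gradSnd φ u v - gradSnd φ u v') ≤ L₂₂ * nV (v - v'))
    (h21 : ∀ u ∈ U, ∀ u' ∈ U, ∀ v ∈ V,
      dualNorm nV (gradSnd φ u v - gradSnd φ u' v) ≤ L₂₁ * nU (u - u')) :
    ∀ u ∈ U, ∀ u' ∈ U, ∀ v ∈ V, ∀ v' ∈ V,
      Real.sqrt (DU ^ 2 * (dualNorm nU (gradFst φ u v - gradFst φ u' v')) ^ 2 +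
          DV ^ 2 * (dualNorm nV ((-gradSnd φ u v) - (-gradSnd φ u' v'))) ^ 2) ≤
        (2 * max (max (L₁₁ * DU ^ 2) (L₂₂ * DV ^ 2))
            (max (L₁₂ * DU * DV) (L₂₁ * DU * DV))) *
          Real.sqrt ((nU (u - u')) ^ 2 / DU ^ 2 + (nV (v - v')) ^ 2 / DV ^ 2) :=
  saddle_operator_smooth_general U V nU hnUdef hnUsmul hnUtri nV hnVdef hnVsmul hnVtri DU DV hDU hDV
    φ L₁₁ L₁₂ L₂₁ L₂₂ hL₁₁0 h11 h12 h22 h21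
end
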